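/- Let φ_T(s,v) = T(s) × T*(s) + v·T(s), where T* = β_T × T and N* = β_N × N, and suppose κ(s)²(v − ⟨β_N(s),T(s)⟩)² + κ*(s)² ≠ 0. Set E₁ = T(s) and E₂ = (κ(v − ⟨β_N,T⟩)·N + κ*·B)/√(κ²(v − ⟨β_N,T⟩)² + κ*²) (functions evaluated at s). Then {E₁, E₂} is the Gram–Schmidt orthonormalization of {∂φ_T/∂v, ∂φ_T/∂s}: in particular ⟨E₁,E₂⟩ = 0, ‖E₂‖ = 1, and E₂ is a positive scalar multiple of ∂φ_T/∂s − ⟨∂φ_T/∂s, E₁⟩·E₁; moreover the unit normal of φ_T satisfies N_T = E₁ × E₂ = (κ(v − ⟨β_N,T⟩)·B − κ*·N)/√(κ²(v − ⟨β_N,T⟩)² + κ*²). -/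

import Mathlib

open Matrix

noncomputable section

/-- Cross product on ℝ³ (as `Fin 3 → ℝ`). -/
def cross3 (a b : Fin 3 → ℝ) : Fin 3 → ℝ := crossProduct a b

/-- Euclidean norm on ℝ³ (as `Fin 3 → ℝ`). -/
noncomputable def enorm3 (a : Fin 3 → ℝ) : ℝ := Real.sqrt (a ⬝ᵥ a)

/-- A dual Frenet apparatus: smooth maps `T, N, B, T*, N*, B* : ℝ → ℝ³` and smooth
functions `κ, τ, κ*, τ* : ℝ → ℝ` such that `{T, N, B}` is orthonormal with `B = T × N`,
the real Frenet equations hold, and the dual-part Frenet equations hold. -/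
structure DualFrenetApparatus where
  T : ℝ → Fin 3 → ℝ
  N : ℝ → Fin 3 → ℝ
  B : ℝ → Fin 3 → ℝ
  Tstar : ℝ → Fin 3 → ℝ
  Nstar : ℝ → Fin 3 → ℝ
  Bstar : ℝ → Fin 3 → ℝ
  kappa : ℝ → ℝ
  tau : ℝ → ℝ
  kappaStar : ℝ → ℝ
  tauStar : ℝ → ℝ
  smooth_T : ContDiff ℝ (⊤ : ℕ∞) T
  smooth_N : ContDiff ℝ (⊤ : ℕ∞) N
  smooth_B : ContDiff ℝ (⊤ : ℕ∞) B
  smooth_Tstar : ContDiff ℝ (⊤ : ℕ∞) Tstar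
  smooth_Nstar : ContDiff ℝ (⊤ : ℕ∞) Nstar
  smooth_Bstar : ContDiff ℝ (⊤ : ℕ∞) Bstar
  smooth_kappa : ContDiff ℝ (⊤ : ℕ∞) kappa
  smooth_tau : ContDiff ℝ (⊤ : ℕ∞) tau
  smooth_kappaStar : ContDiff ℝ (⊤ : ℕ∞) kappaStar
  smooth_tauStar : ContDiff ℝ (⊤ : ℕ∞) tauStar
  unit_T : ∀ s, T s ⬝ᵥ T s = 1
  unit_N : ∀ s, N s ⬝ᵥ N s = 1
  unit_B : ∀ s, B s ⬝ᵥ B s = 1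
  orth_TN : ∀ s, T s ⬝ᵥ N s = 0
  orth_TB : ∀ s, T s ⬝ᵥ B s = 0
  orth_NB : ∀ s, N s ⬝ᵥ B s = 0
  B_eq : ∀ s, B s = cross3 (T s) (N s)
  frenet_T : ∀ s, deriv T s = kappa s • N s
  frenet_N : ∀ s, deriv N s = (-(kappa s)) • T s + tau s • B s
  frenet_B : ∀ s, deriv B s = (-(tau s)) • N s
  frenet_Tstar : ∀ s, deriv Tstar s = kappa s • Nstar s + kappaStar s • N s
  frenet_Nstar : ∀ s, deriv Nstar s =
    (-(kappa s)) • Tstar s + (-(kappaStar s)) • T s + tau s • Bstar s + tauStar s • B s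
  frenet_Bstar : ∀ s, deriv Bstar s = (-(tau s)) • Nstar s + (-(tauStar s)) • N s

/-- Partial derivative of a parametrized surface with respect to the first parameter. -/
noncomputable def phiS (φ : ℝ → ℝ → Fin 3 → ℝ) (s v : ℝ) : Fin 3 → ℝ :=
  deriv (fun t => φ t v) s

/-- Partial derivative with respect to the second parameter. -/
noncomputable def phiV (φ : ℝ → ℝ → Fin 3 → ℝ) (s v : ℝ) : Fin 3 → ℝ :=
  deriv (φ s) v

noncomputable def phiSS (φ : ℝ → ℝ → Fin 3 → ℝ) (s v : ℝ) : Fin 3 → ℝ :=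
  deriv (fun t => phiS φ t v) s

noncomputable def phiSV (φ : ℝ → ℝ → Fin 3 → ℝ) (s v : ℝ) : Fin 3 → ℝ :=
  deriv (fun w => phiS φ s w) v

noncomputable def phiVV (φ : ℝ → ℝ → Fin 3 → ℝ) (s v : ℝ) : Fin 3 → ℝ :=
  deriv (fun w => phiV φ s w) v

/-- `(s, v)` is a regular point of `φ` if `φ_s × φ_v ≠ 0` there. -/
def IsRegularPoint (φ : ℝ → ℝ → Fin 3 → ℝ) (s v : ℝ) : Prop :=
  cross3 (phiS φ s v) (phiV φ s v) ≠ 0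

/-- The unit normal `n = (φ_v × φ_s) / ‖φ_v × φ_s‖`. -/
noncomputable def unitNormal (φ : ℝ → ℝ → Fin 3 → ℝ) (s v : ℝ) : Fin 3 → ℝ :=
  (enorm3 (cross3 (phiV φ s v) (phiS φ s v)))⁻¹ • cross3 (phiV φ s v) (phiS φ s v)

/-- Gaussian curvature `K = (eg − f²)/(EG − F²)`. -/
noncomputable def GaussK (φ : ℝ → ℝ → Fin 3 → ℝ) (s v : ℝ) : ℝ :=
  (phiSS φ s v ⬝ᵥ unitNormal φ s v * (phiVV φ s v ⬝ᵥ unitNormal φ s v) -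
      (phiSV φ s v ⬝ᵥ unitNormal φ s v) ^ 2) /
    (phiS φ s v ⬝ᵥ phiS φ s v * (phiV φ s v ⬝ᵥ phiV φ s v) -
      (phiS φ s v ⬝ᵥ phiV φ s v) ^ 2)

/-- Mean curvature (trace of the shape operator) `H = (eG − 2fF + gE)/(EG − F²)`. -/
noncomputable def MeanH (φ : ℝ → ℝ → Fin 3 → ℝ) (s v : ℝ) : ℝ :=
  (phiSS φ s v ⬝ᵥ unitNormal φ s v * (phiV φ s v ⬝ᵥ phiV φ s v) -
      2 * (phiSV φ s v ⬝ᵥ unitNormal φ s v) * (phiS φ s v ⬝ᵥ phiV φ s v) +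
      phiVV φ s v ⬝ᵥ unitNormal φ s v * (phiS φ s v ⬝ᵥ phiS φ s v)) /
    (phiS φ s v ⬝ᵥ phiS φ s v * (phiV φ s v ⬝ᵥ phiV φ s v) -
      (phiS φ s v ⬝ᵥ phiV φ s v) ^ 2)

/-- The ruled surface `φ_X(s,v) = X(s) × X*(s) + v·X(s)`. -/
noncomputable def ruled (X Xstar : ℝ → Fin 3 → ℝ) : ℝ → ℝ → Fin 3 → ℝ :=
  fun s v => cross3 (X s) (Xstar s) + v • X s


lemma cross3_apply' (a b : Fin 3 → ℝ) (i : Fin 3) : cross3 a b i =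
    ![a 1 * b 2 - a 2 * b 1, a 2 * b 0 - a 0 * b 2, a 0 * b 1 - a 1 * b 0] i := by
  simp [cross3, crossProduct]

lemma hasDerivAt_cross3 {f g : ℝ → Fin 3 → ℝ} {f' g' : Fin 3 → ℝ} {x : ℝ}
    (hf : HasDerivAt f f' x) (hg : HasDerivAt g g' x) :
    HasDerivAt (fun t => cross3 (f t) (g t)) (cross3 f' (g x) + cross3 (f x) g') x := by
  rw [hasDerivAt_pi] at hf hg ⊢
  intro i
  have h1 := hf 1; have h2 := hf 2; have h0 := hf 0
  have k1 := hg 1; have k2 := hg 2; have k0 := hg 0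
  fin_cases i
  · have := (h1.mul k2).sub (h2.mul k1)
    simp only [Pi.add_apply, cross3_apply', Fin.zero_eta, Matrix.cons_val_zero]
    convert this using 1
    · funext y; simp [cross3_apply'] <;> ring
    · ring
  · have := (h2.mul k0).sub (h0.mul k2)
    simp only [Pi.add_apply, cross3_apply', Fin.mk_one, Matrix.cons_val_one, Matrix.head_cons]
    convert this using 1
    · funext y; simp [cross3_apply'] <;> ring
    · simp [cross3_apply'] <;> ring
  · have := (h0.mul k1).sub (h1.mul k0)
    simp only [Pi.add_apply, cross3_apply', Fin.reduceFinMk, Matrix.cons_val_two,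
      Matrix.tail_cons, Matrix.head_cons]
    convert this using 1
    · funext y; simp [cross3_apply'] <;> ring
    · ring

lemma cross3_cross3 (a b c : Fin 3 → ℝ) :
    cross3 a (cross3 b c) = (a ⬝ᵥ c) • b - (a ⬝ᵥ b) • c := by
  funext i; fin_cases i <;>
    simp [cross3_apply', dotProduct, Fin.sum_univ_three] <;> ring

lemma cross3_smul_right (c : ℝ) (a b : Fin 3 → ℝ) : cross3 a (c • b) = c • cross3 a b := by
  funext i; fin_cases i <;> simp [cross3_apply'] <;> ring

lemma cross3_smul_left (c : ℝ) (a b : Fin 3 → ℝ) : cross3 (c • a) b = c • cross3 a b := by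
  funext i; fin_cases i <;> simp [cross3_apply'] <;> ring

lemma cross3_add_right (a b c : Fin 3 → ℝ) : cross3 a (b + c) = cross3 a b + cross3 a c := by
  funext i; fin_cases i <;> simp [cross3_apply'] <;> ring

lemma cross3_self (a : Fin 3 → ℝ) : cross3 a a = 0 := by
  funext i; fin_cases i <;> simp [cross3_apply'] <;> ring

/-- Gram–Schmidt orthonormalization of `{∂φ_T/∂v, ∂φ_T/∂s}` for the ruled surface
`φ_T(s,v) = T × T* + v T`, and the resulting unit normal `N_T = E₁ × E₂`. -/
theorem gram_schmidt_tangent_indicatrix (F : DualFrenetApparatus)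
    (βT βN : ℝ → Fin 3 → ℝ)
    (hβT : ContDiff ℝ (⊤ : ℕ∞) βT) (hβN : ContDiff ℝ (⊤ : ℕ∞) βN)
    (hTstar : ∀ s, F.Tstar s = cross3 (βT s) (F.T s))
    (hNstar : ∀ s, F.Nstar s = cross3 (βN s) (F.N s)) :
    ∀ s v : ℝ,
      F.kappa s ^ 2 * (v - βN s ⬝ᵥ F.T s) ^ 2 + F.kappaStar s ^ 2 ≠ 0 →
      (F.T s) ⬝ᵥ
          ((Real.sqrt (F.kappa s ^ 2 * (v - βN s ⬝ᵥ F.T s) ^ 2 + F.kappaStar s ^ 2))⁻¹ •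
            ((F.kappa s * (v - βN s ⬝ᵥ F.T s)) • F.N s + F.kappaStar s • F.B s)) = 0 ∧
      enorm3
          ((Real.sqrt (F.kappa s ^ 2 * (v - βN s ⬝ᵥ F.T s) ^ 2 + F.kappaStar s ^ 2))⁻¹ •
            ((F.kappa s * (v - βN s ⬝ᵥ F.T s)) • F.N s + F.kappaStar s • F.B s)) = 1 ∧
      (∃ c : ℝ, 0 < c ∧
        (Real.sqrt (F.kappa s ^ 2 * (v - βN s ⬝ᵥ F.T s) ^ 2 + F.kappaStar s ^ 2))⁻¹ •
            ((F.kappa s * (v - βN s ⬝ᵥ F.T s)) • F.N s + F.kappaStar s • F.B s) =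
          c • (phiS (ruled F.T F.Tstar) s v -
            (phiS (ruled F.T F.Tstar) s v ⬝ᵥ F.T s) • F.T s)) ∧
      unitNormal (ruled F.T F.Tstar) s v =
        cross3 (F.T s)
          ((Real.sqrt (F.kappa s ^ 2 * (v - βN s ⬝ᵥ F.T s) ^ 2 + F.kappaStar s ^ 2))⁻¹ •
            ((F.kappa s * (v - βN s ⬝ᵥ F.T s)) • F.N s + F.kappaStar s • F.B s)) ∧
      cross3 (F.T s)
          ((Real.sqrt (F.kappa s ^ 2 * (v - βN s ⬝ᵥ F.T s) ^ 2 + F.kappaStar s ^ 2))⁻¹ •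
            ((F.kappa s * (v - βN s ⬝ᵥ F.T s)) • F.N s + F.kappaStar s • F.B s)) =
        (Real.sqrt (F.kappa s ^ 2 * (v - βN s ⬝ᵥ F.T s) ^ 2 + F.kappaStar s ^ 2))⁻¹ •
          ((F.kappa s * (v - βN s ⬝ᵥ F.T s)) • F.B s - F.kappaStar s • F.N s) := by
  intro s v hD
  set k := F.kappa s with hk
  set ks := F.kappaStar s with hks
  set T := F.T s with hT
  set N := F.N s with hN
  set B := F.B s with hB
  set a : ℝ := k * (v - βN s ⬝ᵥ T) with ha
  set D : ℝ := k ^ 2 * (v - βN s ⬝ᵥ T) ^ 2 + ks ^ 2 with hDdef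
  set r : ℝ := Real.sqrt D with hrdef
  have hDpos : 0 < D := lt_of_le_of_ne (by positivity) (Ne.symm hD)
  have hrpos : 0 < r := Real.sqrt_pos.2 hDpos
  have hrr : r * r = D := Real.mul_self_sqrt hDpos.le
  -- orthonormality facts
  have uT : T ⬝ᵥ T = 1 := F.unit_T s
  have uN : N ⬝ᵥ N = 1 := F.unit_N s
  have uB : B ⬝ᵥ B = 1 := F.unit_B s
  have oTN : T ⬝ᵥ N = 0 := F.orth_TN s
  have oTB : T ⬝ᵥ B = 0 := F.orth_TB s
  have oNB : N ⬝ᵥ B = 0 := F.orth_NB s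
  have oNT : N ⬝ᵥ T = 0 := by rw [dotProduct_comm]; exact oTN
  have oBT : B ⬝ᵥ T = 0 := by rw [dotProduct_comm]; exact oTB
  have oBN : B ⬝ᵥ N = 0 := by rw [dotProduct_comm]; exact oNB
  have hBeq : B = cross3 T N := F.B_eq s
  have hTxB : cross3 T B = -N := by
    rw [hBeq, cross3_cross3, oTN, uT]; module
  -- derivatives
  have hT' : HasDerivAt F.T (k • N) s := by
    have h := (F.smooth_T.differentiable (by simp) s).hasDerivAt
    rwa [F.frenet_T s] at h
  have hTs' : HasDerivAt F.Tstar (k • F.Nstar s + ks • N) s := by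
    have h := (F.smooth_Tstar.differentiable (by simp) s).hasDerivAt
    rwa [F.frenet_Tstar s] at h
  have hphiV : phiV (ruled F.T F.Tstar) s v = T := by
    have h : HasDerivAt (fun w : ℝ => cross3 (F.T s) (F.Tstar s) + w • F.T s)
        ((1 : ℝ) • F.T s) v := ((hasDerivAt_id v).smul_const (F.T s)).const_add _
    have : phiV (ruled F.T F.Tstar) s v =
        deriv (fun w : ℝ => cross3 (F.T s) (F.Tstar s) + w • F.T s) v := rfl
    rw [this, h.deriv, one_smul]
  have hphiS : phiS (ruled F.T F.Tstar) s v
      = (-(k * (N ⬝ᵥ βT s))) • T + a • N + ks • B := by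
    have hc := hasDerivAt_cross3 hT' hTs'
    have hv : HasDerivAt (fun t => v • F.T t) (v • (k • N)) s := hT'.const_smul v
    have h := hc.add hv
    have hder : phiS (ruled F.T F.Tstar) s v =
        (cross3 (k • N) (F.Tstar s) + cross3 (F.T s) (k • F.Nstar s + ks • N)) +
          v • (k • N) := by
      unfold phiS ruled
      exact h.deriv
    rw [hder, hTstar s, hNstar s, ← hT, ← hN]
    have hTβ : T ⬝ᵥ βN s = βN s ⬝ᵥ T := dotProduct_comm _ _
    rw [cross3_smul_left, cross3_add_right, cross3_smul_right, cross3_smul_right,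
      cross3_cross3, cross3_cross3, ← hBeq, oNT, oTN, hTβ, ha]
    module
  -- the cross product phiV × phiS
  have hcross : cross3 (phiV (ruled F.T F.Tstar) s v) (phiS (ruled F.T F.Tstar) s v)
      = a • B - ks • N := by
    rw [hphiV, hphiS, cross3_add_right, cross3_add_right, cross3_smul_right,
      cross3_smul_right, cross3_smul_right, cross3_self, ← hBeq, hTxB]
    module
  -- E2 expands
  have hE2dot : ((a • N + ks • B) ⬝ᵥ (a • N + ks • B)) = D := by
    simp only [dotProduct_add, add_dotProduct, dotProduct_smul, smul_dotProduct,
      smul_eq_mul, uN, uB, oNB, oBN]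
    rw [ha, hDdef]; ring
  refine ⟨?_, ?_, ?_, ?_, ?_⟩
  · -- orthogonality
    simp only [dotProduct_smul, dotProduct_add, smul_eq_mul, oTN, oTB]
    ring
  · -- unit norm
    unfold enorm3
    rw [smul_dotProduct, dotProduct_smul, hE2dot, smul_eq_mul, smul_eq_mul]
    have : r⁻¹ * (r⁻¹ * D) = 1 := by
      field_simp
      rw [sq, hrr]
    rw [this, Real.sqrt_one]
  · -- Gram-Schmidt positive multiple
    refine ⟨r⁻¹, inv_pos.2 hrpos, ?_⟩
    have hdotT : phiS (ruled F.T F.Tstar) s v ⬝ᵥ T = -(k * (N ⬝ᵥ βT s)) := by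
      rw [hphiS]
      simp only [add_dotProduct, smul_dotProduct, smul_eq_mul, uT, oNT, oBT]
      ring
    rw [hdotT, hphiS]
    congr 1
    module
  · -- unit normal = E1 × E2
    unfold unitNormal
    rw [hcross]
    have hnorm : enorm3 (a • B - ks • N) = r := by
      unfold enorm3
      have : (a • B - ks • N) ⬝ᵥ (a • B - ks • N) = D := by
        simp only [dotProduct_sub, sub_dotProduct, dotProduct_smul, smul_dotProduct,
          smul_eq_mul, uN, uB, oNB, oBN]
        rw [ha, hDdef]; ring
      rw [this]
    rw [hnorm, cross3_smul_right, cross3_add_right, cross3_smul_right, cross3_smul_right,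
      ← hBeq, hTxB]
    congr 1
    module
  · -- E1 × E2 explicit formula
    rw [cross3_smul_right, cross3_add_right, cross3_smul_right, cross3_smul_right,
      ← hBeq, hTxB]
    congr 1
    module


end
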